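/- arXiv:1705.02015 — 7 statements merged into one kernel-verified Lean document; each statement's English description precedes it below -/
import Mathlib

section
/- Let B be a convex set in R^n whose interior contains no integer points, and suppose B is defined by linear inequalities whose facet-defining hyperplanes each contain an integer point of [0,1]^n in the relative interior of the corresponding facet, constructed from a family of pairwise disjoint faces of the unit cube covering its vertices as in the text. Then for every i with 2 ≤ i ≤ 2^n there exists a maximal lattice-free polyhedron in R^n with exactly i facets. -/
open Pointwise

/-- A lattice-free set: an `n`-dimensional closed convex set whose interior contains
no integer point. -/
def IsLatticeFree (n : ℕ) (B : Set (EuclideanSpace ℝ (Fin n))) : Prop :=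
  IsClosed B ∧ Convex ℝ B ∧ (interior B).Nonempty ∧
    ∀ z : Fin n → ℤ, (WithLp.toLp 2 (fun t => (z t : ℝ)) : EuclideanSpace ℝ (Fin n)) ∉ interior B

/-- A maximal lattice-free set. -/
def IsMaximalLatticeFree (n : ℕ) (B : Set (EuclideanSpace ℝ (Fin n))) : Prop :=
  IsLatticeFree n B ∧ ∀ B', IsLatticeFree n B' → B ⊆ B' → B' = B

/-- `B` is the intersection of `k` half-spaces with nonzero normals. -/
def HalfspaceRep (n k : ℕ) (B : Set (EuclideanSpace ℝ (Fin n))) : Prop :=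
  ∃ (a : Fin k → EuclideanSpace ℝ (Fin n)) (b : Fin k → ℝ),
    (∀ j, a j ≠ 0) ∧ B = {x | ∀ j, (inner ℝ (a j) (x) : ℝ) ≤ b j}

/-!
By induction on `n`, for `1 ≤ i ≤ 2^n` there is a complete binary prefix code `C` of `i` words of
length at most `n`. A word `w` fixes the first `|w|` coordinates of a face `F_w` of the cube
`[0,1]^n`, and `∑_{w_t = 1} x_t - ∑_{w_t = 0} x_t ≤ #{t | w_t = 1}` is valid on the cube with
equality exactly on `F_w`. These `i` inequalities cut out a polyhedron `B` containing the centre of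
the cube in its interior; an integer point `z` meets or violates the inequality of the word of `C`
that is a prefix of `(z_t ≥ 1)_t`, so `B` is lattice-free. The vertex of `F_w` with zeros beyond
`|w|` satisfies every inequality but that of `w` strictly. Such integer points in the relative
interior of each facet make `B` maximal, and since the midpoint of two of them is interior to `B`,
no bounding hyperplane contains two of them: every description of `B` uses at least `i`
half-spaces.
-/

open Filter Topology

section Polyhedron

variable {E : Type*} [NormedAddCommGroup E] [InnerProductSpace ℝ E] {ι κ : Type*}

lemma exists_pos_add_smul_mem {F : Type*} [AddCommGroup F] [TopologicalSpace F] [Module ℝ F]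
    [ContinuousAdd F] [ContinuousSMul ℝ F] {U : Set F} {x : F} (hU : U ∈ 𝓝 x) (v : F) :
    ∃ μ > (0 : ℝ), x + μ • v ∈ U := by
  have hcont : Tendsto (fun μ : ℝ => x + μ • v) (𝓝[>] 0) (𝓝 x) := by
    have := (continuous_const.add (continuous_id.smul continuous_const)).tendsto (0 : ℝ)
      (f := fun μ : ℝ => x + μ • v)
    simpa using this.mono_left nhdsWithin_le_nhds
  obtain ⟨μ, hμU, hμ⟩ := ((hcont.eventually hU).and self_mem_nhdsWithin).exists
  exact ⟨μ, hμ, hμU⟩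

def polyhedron (a : ι → E) (b : ι → ℝ) : Set E := {x | ∀ j, inner ℝ (a j) x ≤ b j}

lemma isClosed_polyhedron (a : ι → E) (b : ι → ℝ) : IsClosed (polyhedron a b) := by
  rw [polyhedron, Set.ofPred_forall]
  exact isClosed_iInter fun j =>
    isClosed_le (continuous_const.inner continuous_id) continuous_const

lemma convex_polyhedron (a : ι → E) (b : ι → ℝ) : Convex ℝ (polyhedron a b) := by
  rw [polyhedron, Set.ofPred_forall]
  exact convex_iInter fun j => convex_halfSpace_le (innerₛₗ ℝ (a j)).isLinear (b j)

lemma setOf_inner_lt_subset_interior_polyhedron [Finite ι] (a : ι → E) (b : ι → ℝ) :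
    {x | ∀ j, inner ℝ (a j) x < b j} ⊆ interior (polyhedron a b) := by
  refine interior_maximal (fun _ hx j => (hx j).le) ?_
  rw [Set.ofPred_forall]
  exact isOpen_iInter_of_finite fun j =>
    isOpen_lt (continuous_const.inner continuous_id) continuous_const

lemma inner_lt_of_mem_interior_polyhedron {a : ι → E} {b : ι → ℝ} {j : ι} (ha : a j ≠ 0) {x : E}
    (hx : x ∈ interior (polyhedron a b)) : inner ℝ (a j) x < b j := by
  obtain ⟨μ, hμ, hmem⟩ := exists_pos_add_smul_mem (mem_interior_iff_mem_nhds.1 hx) (a j)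
  have hle := hmem j
  rw [inner_add_right, real_inner_smul_right, real_inner_self_eq_norm_sq] at hle
  have : 0 < μ * ‖a j‖ ^ 2 := by positivity
  linarith

lemma inner_midpoint_right (u x y : E) :
    inner ℝ u (midpoint ℝ x y) = (inner ℝ u x + inner ℝ u y) / 2 := by
  rw [midpoint_eq_smul_add, inner_smul_right, inner_add_right, invOf_eq_inv]
  ring

def IsFacetRelintPoint (a : ι → E) (b : ι → ℝ) (j : ι) (v : E) : Prop :=
  inner ℝ (a j) v = b j ∧ ∀ j' ≠ j, inner ℝ (a j') v < b j'

lemma IsFacetRelintPoint.mem_polyhedron {a : ι → E} {b : ι → ℝ} {j : ι} {v : E}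
    (hv : IsFacetRelintPoint a b j v) : v ∈ polyhedron a b := fun j' =>
  (eq_or_ne j' j).elim (fun h => h ▸ hv.1.le) fun h => (hv.2 j' h).le

lemma IsFacetRelintPoint.mem_interior [Finite ι] {a : ι → E} {b : ι → ℝ} {j : ι} {v : E}
    (hv : IsFacetRelintPoint a b j v) {C : Set E} (hC : Convex ℝ C) (hBC : polyhedron a b ⊆ C)
    {y : E} (hy : y ∈ C) (hyj : b j < inner ℝ (a j) y) : v ∈ interior C := by
  have hU : IsOpen {x | ∀ j' ≠ j, inner ℝ (a j') x < b j'} := by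
    simp only [Set.ofPred_forall]
    exact isOpen_iInter_of_finite fun j' => isOpen_iInter_of_finite fun _ =>
      isOpen_lt (continuous_const.inner continuous_id) continuous_const
  obtain ⟨μ, hμ, hxU⟩ := exists_pos_add_smul_mem (hU.mem_nhds hv.2) (v - y)
  set x := v + μ • (v - y)
  have hxj : inner ℝ (a j) x < b j := by
    simp only [x, inner_add_right, real_inner_smul_right, inner_sub_right, hv.1]
    nlinarith
  have hx : x ∈ interior C := interior_mono hBC <|
    setOf_inner_lt_subset_interior_polyhedron a b fun j' =>
      (eq_or_ne j' j).elim (fun h => h ▸ hxj) (hxU j')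
  have hvx : v = (1 + μ)⁻¹ • x + (μ / (1 + μ)) • y := by
    have : (1 + μ) ≠ 0 := by positivity
    simp only [x]
    match_scalars <;> field_simp
    ring
  rw [hvx]
  exact hC.combo_interior_self_mem_interior hx hy (by positivity) (by positivity) (by field_simp)

lemma card_le_of_polyhedron_eq [Finite ι] [Finite κ] {a : ι → E} {b : ι → ℝ} {c : κ → E}
    {d : κ → ℝ} (ha : ∀ j, a j ≠ 0) (hc : ∀ t, c t ≠ 0) (heq : polyhedron a b = polyhedron c d)
    {v : ι → E} (hv : ∀ j, IsFacetRelintPoint a b j (v j)) : Nat.card ι ≤ Nat.card κ := by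
  have hint : {x | ∀ j, inner ℝ (a j) x < b j} ⊆ {x | ∀ t, inner ℝ (c t) x < d t} :=
    fun x hx => fun t => inner_lt_of_mem_interior_polyhedron (hc t) <|
      heq ▸ setOf_inner_lt_subset_interior_polyhedron a b hx
  have hT : ∀ j, ∃ t, inner ℝ (c t) (v j) = d t := by
    intro j
    by_contra! hne
    have hvB : v j ∈ polyhedron c d := heq ▸ (hv j).mem_polyhedron
    have hvint : v j ∈ interior (polyhedron a b) :=
      heq ▸ setOf_inner_lt_subset_interior_polyhedron c d fun t => (hvB t).lt_of_ne (hne t)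
    exact (inner_lt_of_mem_interior_polyhedron (ha j) hvint).ne (hv j).1
  choose T hT using hT
  refine Nat.card_le_card_of_injective T fun j j' hjj' => ?_
  by_contra hne
  have hlt : midpoint ℝ (v j) (v j') ∈ {x | ∀ j, inner ℝ (a j) x < b j} := by
    intro k
    rw [inner_midpoint_right]
    rcases eq_or_ne k j with rfl | hkj
    · linarith [(hv k).1, (hv j').2 k hne]
    · linarith [(hv j).2 k hkj, (hv j').mem_polyhedron k]
  have := hint hlt (T j)
  rw [inner_midpoint_right, hT j, hjj', hT j'] at this
  linarith

end Polyhedron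

section LatticeFree

variable {n : ℕ} {ι : Type*}

abbrev latticePoint (z : Fin n → ℤ) : EuclideanSpace ℝ (Fin n) := WithLp.toLp 2 fun t => (z t : ℝ)

lemma isLatticeFree_polyhedron [Finite ι] {a : ι → EuclideanSpace ℝ (Fin n)} {b : ι → ℝ}
    (ha : ∀ j, a j ≠ 0) {p : EuclideanSpace ℝ (Fin n)} (hp : ∀ j, inner ℝ (a j) p < b j)
    (hz : ∀ z : Fin n → ℤ, ∃ j, b j ≤ inner ℝ (a j) (latticePoint z)) :
    IsLatticeFree n (polyhedron a b) :=
  ⟨isClosed_polyhedron a b, convex_polyhedron a b,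
    ⟨p, setOf_inner_lt_subset_interior_polyhedron a b hp⟩, fun z hzB =>
      let ⟨j, hj⟩ := hz z
      (inner_lt_of_mem_interior_polyhedron (ha j) hzB).not_ge hj⟩

lemma isMaximalLatticeFree_polyhedron [Finite ι] {a : ι → EuclideanSpace ℝ (Fin n)} {b : ι → ℝ}
    (hB : IsLatticeFree n (polyhedron a b)) {v : ι → Fin n → ℤ}
    (hv : ∀ j, IsFacetRelintPoint a b j (latticePoint (v j))) :
    IsMaximalLatticeFree n (polyhedron a b) := by
  refine ⟨hB, fun B' hB' hBB' => Set.Subset.antisymm (fun y hy => ?_) hBB'⟩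
  by_contra hyB
  obtain ⟨j, hj⟩ : ∃ j, b j < inner ℝ (a j) y := by simpa [polyhedron] using hyB
  exact hB'.2.2.2 (v j) ((hv j).mem_interior hB'.2.1 hBB' hy hj)

lemma halfspaceRep_polyhedron [Fintype ι] {a : ι → EuclideanSpace ℝ (Fin n)} (ha : ∀ j, a j ≠ 0)
    (b : ι → ℝ) : HalfspaceRep n (Fintype.card ι) (polyhedron a b) := by
  let e := Fintype.equivFin ι
  refine ⟨a ∘ e.symm, b ∘ e.symm, fun t => ha _, ?_⟩
  ext x
  simp [polyhedron, e.symm.forall_congr_left]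

end LatticeFree

lemma exists_getElem?_eq_not_of_not_prefix {w w' : List Bool} (h : ¬ w <+: w')
    (h' : ¬ w' <+: w) : ∃ (t : ℕ) (b : Bool), w[t]? = some b ∧ w'[t]? = some (!b) := by
  wlog hle : w.length ≤ w'.length generalizing w w'
  · obtain ⟨t, b, h₁, h₂⟩ := this h' h (by omega)
    exact ⟨t, !b, h₂, by simpa using h₁⟩
  by_contra! hne
  refine h (List.prefix_iff_getElem?.2 fun t ht => ?_)
  rw [List.getElem?_eq_getElem (by omega)]
  by_contra hb
  exact hne t w[t] (List.getElem?_eq_getElem ht) (by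
    rw [List.getElem?_eq_getElem (by omega)]
    simpa [Bool.eq_not_iff] using hb)

structure IsCompletePrefixCode (n : ℕ) (C : Finset (List Bool)) : Prop where
  length_le : ∀ w ∈ C, w.length ≤ n
  eq_of_prefix : ∀ w ∈ C, ∀ w' ∈ C, w <+: w' → w = w'
  exists_prefix : ∀ s : List Bool, s.length = n → ∃ w ∈ C, w <+: s

namespace IsCompletePrefixCode

lemma singleton_nil (n : ℕ) : IsCompletePrefixCode n {[]} where
  length_le := by simp
  eq_of_prefix := by simp
  exists_prefix s _ := ⟨[], by simp, List.nil_prefix⟩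

lemma union_image_cons {n : ℕ} {C₀ C₁ : Finset (List Bool)} (h₀ : IsCompletePrefixCode n C₀)
    (h₁ : IsCompletePrefixCode n C₁) :
    IsCompletePrefixCode (n + 1) (C₀.image (false :: ·) ∪ C₁.image (true :: ·)) where
  length_le := by
    simp only [Finset.mem_union, Finset.mem_image]
    rintro _ (⟨w, hw, rfl⟩ | ⟨w, hw, rfl⟩) <;> simp [h₀.length_le, h₁.length_le, hw]
  eq_of_prefix := by
    simp only [Finset.mem_union, Finset.mem_image]
    rintro _ (⟨w, hw, rfl⟩ | ⟨w, hw, rfl⟩) _ (⟨w', hw', rfl⟩ | ⟨w', hw', rfl⟩) h <;>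
      simp only [List.cons_prefix_cons, Bool.false_eq_true, Bool.true_eq_false, true_and,
        false_and, List.cons.injEq] at h ⊢
    exacts [h₀.eq_of_prefix w hw w' hw' h, h₁.eq_of_prefix w hw w' hw' h]
  exists_prefix := by
    rintro (_ | ⟨_ | _, s⟩) hs
    · simp at hs
    · obtain ⟨w, hw, hws⟩ := h₀.exists_prefix s (by simpa using hs)
      exact ⟨false :: w, by simp [hw], List.cons_prefix_cons.2 ⟨rfl, hws⟩⟩
    · obtain ⟨w, hw, hws⟩ := h₁.exists_prefix s (by simpa using hs)
      exact ⟨true :: w, by simp [hw], List.cons_prefix_cons.2 ⟨rfl, hws⟩⟩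

lemma ne_nil_of_mem {n : ℕ} {C : Finset (List Bool)} (hC : IsCompletePrefixCode n C)
    (hcard : 1 < C.card) {w : List Bool} (hw : w ∈ C) : w ≠ [] := by
  rintro rfl
  have hsub : C ⊆ {[]} := fun w' hw' =>
    Finset.mem_singleton.2 (hC.eq_of_prefix _ hw _ hw' List.nil_prefix).symm
  have := Finset.card_le_card hsub
  rw [Finset.card_singleton] at this
  omega

end IsCompletePrefixCode

lemma card_union_image_cons (C₀ C₁ : Finset (List Bool)) :
    (C₀.image (false :: ·) ∪ C₁.image (true :: ·)).card = C₀.card + C₁.card := by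
  rw [Finset.card_union_of_disjoint, Finset.card_image_of_injective _ List.cons_injective,
    Finset.card_image_of_injective _ List.cons_injective]
  simp [Finset.disjoint_left]

lemma exists_isCompletePrefixCode_card (n i : ℕ) (h1 : 1 ≤ i) (hi : i ≤ 2 ^ n) :
    ∃ C, IsCompletePrefixCode n C ∧ C.card = i := by
  induction n generalizing i with
  | zero =>
    rw [pow_zero] at hi
    exact ⟨{[]}, .singleton_nil 0, by rw [Finset.card_singleton]; omega⟩
  | succ n ih =>
    rcases h1.eq_or_lt with rfl | h2
    · exact ⟨{[]}, .singleton_nil _, rfl⟩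
    obtain ⟨C₀, h₀, hcard₀⟩ := ih (i / 2) (by omega) (by rw [pow_succ] at hi; omega)
    obtain ⟨C₁, h₁, hcard₁⟩ := ih (i - i / 2) (by omega) (by rw [pow_succ] at hi; omega)
    exact ⟨_, h₀.union_image_cons h₁, by rw [card_union_image_cons]; omega⟩

def bitSign : Option Bool → ℝ
  | some true => 1
  | some false => -1
  | none => 0

def bitVal (o : Option Bool) : ℤ := if o = some true then 1 else 0

lemma bitSign_mul_bitVal (o : Option Bool) : bitSign o * bitVal o = bitVal o := by
  rcases o with _ | _ | _ <;> simp [bitSign, bitVal]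

lemma bitSign_mul_le {x : ℝ} (hx : x ∈ Set.Icc 0 1) (o : Option Bool) :
    bitSign o * x ≤ bitVal o := by
  rcases o with _ | _ | _ <;> simp [bitSign, bitVal] <;> linarith [hx.1, hx.2]

lemma bitSign_mul_lt {x : ℝ} (hx : x ∈ Set.Icc 0 1) {o : Option Bool} (ho : o ≠ none)
    (hxo : x ≠ bitVal o) : bitSign o * x < bitVal o := by
  rcases o with _ | _ | _ <;> simp_all [bitSign, bitVal]
  exacts [lt_of_le_of_ne hx.1 (Ne.symm hxo), lt_of_le_of_ne hx.2 hxo]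

lemma bitVal_le_bitSign_mul {o : Option Bool} {z : ℤ} (hz : ∀ b, o = some b → (b = true ↔ 1 ≤ z)) :
    (bitVal o : ℝ) ≤ bitSign o * z := by
  rcases o with _ | _ | _ <;> simp_all [bitSign, bitVal] <;> exact_mod_cast (by omega)

section Facet

variable (n : ℕ) (w : List Bool)

def facetNormal : EuclideanSpace ℝ (Fin n) := WithLp.toLp 2 fun t => bitSign w[(t : ℕ)]?

def facetVertex : Fin n → ℤ := fun t => bitVal w[(t : ℕ)]?

def facetBound : ℝ := ∑ t : Fin n, (bitVal w[(t : ℕ)]? : ℝ)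

variable {n w}

lemma inner_facetNormal (x : EuclideanSpace ℝ (Fin n)) :
    inner ℝ (facetNormal n w) x = ∑ t : Fin n, bitSign w[(t : ℕ)]? * x t := by
  simp [facetNormal, PiLp.inner_apply, mul_comm]

lemma inner_facetNormal_facetVertex :
    inner ℝ (facetNormal n w) (latticePoint (facetVertex n w)) = facetBound n w := by
  simp only [inner_facetNormal, facetVertex, facetBound, bitSign_mul_bitVal]

lemma inner_facetNormal_lt {x : EuclideanSpace ℝ (Fin n)} (hx : ∀ t, x t ∈ Set.Icc 0 1) {t : Fin n}
    (ht : w[(t : ℕ)]? ≠ none) (hxt : x t ≠ bitVal w[(t : ℕ)]?) :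
    inner ℝ (facetNormal n w) x < facetBound n w := by
  rw [inner_facetNormal, facetBound]
  exact Finset.sum_lt_sum (fun s _ => bitSign_mul_le (hx s) _)
    ⟨t, Finset.mem_univ t, bitSign_mul_lt (hx t) ht hxt⟩

lemma facetBound_le_inner {z : Fin n → ℤ}
    (hz : ∀ (t : Fin n) b, w[(t : ℕ)]? = some b → (b = true ↔ 1 ≤ z t)) :
    facetBound n w ≤ inner ℝ (facetNormal n w) (latticePoint z) := by
  rw [inner_facetNormal, facetBound]
  exact Finset.sum_le_sum fun t _ => bitVal_le_bitSign_mul (hz t)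

lemma inner_facetNormal_half_lt (hw : w ≠ []) (hlen : w.length ≤ n) :
    inner ℝ (facetNormal n w) (WithLp.toLp 2 fun _ => 2⁻¹) < facetBound n w := by
  have h0 : 0 < n := (List.length_pos_iff.2 hw).trans_le hlen
  refine inner_facetNormal_lt (t := ⟨0, h0⟩) (fun _ => by norm_num) (by simpa using hw) ?_
  unfold bitVal
  split_ifs <;> norm_num

lemma facetNormal_ne_zero (hw : w ≠ []) (hlen : w.length ≤ n) : facetNormal n w ≠ 0 := by
  intro h0
  have := inner_facetNormal_half_lt hw hlen
  rw [← inner_facetNormal_facetVertex, h0, inner_zero_left, inner_zero_left] at this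
  exact this.false

end Facet

abbrev codePolyhedron (n : ℕ) (C : Finset (List Bool)) : Set (EuclideanSpace ℝ (Fin n)) :=
  polyhedron (fun w : C => facetNormal n w) (fun w : C => facetBound n w)

namespace IsCompletePrefixCode

variable {n : ℕ} {C : Finset (List Bool)}

lemma facetNormal_ne_zero (hC : IsCompletePrefixCode n C) (hcard : 1 < C.card) (w : C) :
    facetNormal n w ≠ 0 :=
  _root_.facetNormal_ne_zero (hC.ne_nil_of_mem hcard w.2) (hC.length_le w w.2)

lemma exists_facetBound_le (hC : IsCompletePrefixCode n C) (z : Fin n → ℤ) :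
    ∃ w : C, facetBound n w ≤ inner ℝ (facetNormal n w) (latticePoint z) := by
  obtain ⟨w, hw, hws⟩ := hC.exists_prefix (List.ofFn fun t => decide (1 ≤ z t)) (by simp)
  refine ⟨⟨w, hw⟩, facetBound_le_inner fun t b hb => ?_⟩
  obtain ⟨ht, rfl⟩ := List.getElem?_eq_some_iff.1 hb
  simp [hws.getElem ht]

lemma isLatticeFree_codePolyhedron (hC : IsCompletePrefixCode n C) (hcard : 1 < C.card) :
    IsLatticeFree n (codePolyhedron n C) :=
  isLatticeFree_polyhedron (hC.facetNormal_ne_zero hcard)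
    (fun w => inner_facetNormal_half_lt (hC.ne_nil_of_mem hcard w.2) (hC.length_le w w.2))
    hC.exists_facetBound_le

lemma isFacetRelintPoint_facetVertex (hC : IsCompletePrefixCode n C) (w : C) :
    IsFacetRelintPoint (fun w : C => facetNormal n w) (fun w : C => facetBound n w) w
      (latticePoint (facetVertex n w)) := by
  refine ⟨inner_facetNormal_facetVertex, fun w' hw' => ?_⟩
  have hne : (w' : List Bool) ≠ w := fun h => hw' (Subtype.ext h)
  obtain ⟨t, b, hw't, hwt⟩ := exists_getElem?_eq_not_of_not_prefix
    (fun h => hne (hC.eq_of_prefix _ w'.2 _ w.2 h))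
    (fun h => hne (hC.eq_of_prefix _ w.2 _ w'.2 h).symm)
  have ht : t < n := (List.getElem?_eq_some_iff.1 hw't).1.trans_le (hC.length_le _ w'.2)
  refine inner_facetNormal_lt (t := ⟨t, ht⟩) (fun s => ?_) (by simp [hw't]) ?_
  · simp only [facetVertex, bitVal]
    split_ifs <;> norm_num
  · cases b <;> simp [facetVertex, bitVal, hwt, hw't]

end IsCompletePrefixCode

theorem exists_maximal_latticeFree_with_exactly_i_facets_general (n : ℕ)
    (i : ℕ) (h2 : 2 ≤ i) (hi : i ≤ 2 ^ n) :
    ∃ B : Set (EuclideanSpace ℝ (Fin n)),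
      IsMaximalLatticeFree n B ∧ HalfspaceRep n i B ∧ ∀ k < i, ¬ HalfspaceRep n k B := by
  obtain ⟨C, hC, rfl⟩ := exists_isCompletePrefixCode_card n i (by omega) hi
  have ha := hC.facetNormal_ne_zero h2
  have hv := hC.isFacetRelintPoint_facetVertex
  refine ⟨codePolyhedron n C,
    isMaximalLatticeFree_polyhedron (hC.isLatticeFree_codePolyhedron h2) hv, ?_, ?_⟩
  · simpa using halfspaceRep_polyhedron ha _
  · rintro k hk ⟨c, d, hc, hB⟩
    have := card_le_of_polyhedron_eq ha hc (d := d) hB hv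
    simp only [Nat.card_eq_fintype_card, Fintype.card_coe, Fintype.card_fin] at this
    omega

/-- For every `i` with `2 ≤ i ≤ 2^n`, there exists a maximal lattice-free polyhedron
in `ℝ^n` with exactly `i` facets. -/
theorem exists_maximal_latticeFree_with_exactly_i_facets (n : ℕ) (hn : 1 ≤ n)
    (i : ℕ) (h2 : 2 ≤ i) (hi : i ≤ 2 ^ n) :
    ∃ B : Set (EuclideanSpace ℝ (Fin n)),
      IsMaximalLatticeFree n B ∧ HalfspaceRep n i B ∧ ∀ k < i, ¬ HalfspaceRep n k B :=
  exists_maximal_latticeFree_with_exactly_i_facets_general n i h2 hi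
end

section
/- Let V be a nonempty finite subset of R^n, W a nonempty finite subset of R^n \ {0}, L = conv(V) + cone(W), and f ∈ int(L). For t ∈ N define L_t = conv(V ∪ (f + tW)). Then f ∈ int(L_t) for every t ∈ N. -/
/-!
Every point `x = v + ∑ c_w w` of `conv V + cone W` can be pulled towards `f` into
`L_t = conv(V ∪ (f + tW))`: with `S = ∑ c_w`, the point `f + t/(t+S) • (x - f)` is the barycentre
of `v` with weight `t` and of the points `f + t w` with weights `c_w`. Since `f` is interior to
`conv V + cone W`, it follows that from `f` every direction enters the convex set `L_t`, and in
finite dimension such a point is interior: `L_t` then spans the whole space, so it has an interior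
point `g`, and `f` lies strictly between `g` and a point of `L_t` beyond `f`.
-/

open Pointwise Finset Filter Topology

/-- The convex conic hull of a finite set `W`: all nonnegative combinations. -/
def coneHull (n : ℕ) (W : Finset (EuclideanSpace ℝ (Fin n))) :
    Set (EuclideanSpace ℝ (Fin n)) :=
  {x | ∃ c : EuclideanSpace ℝ (Fin n) → ℝ, (∀ w, 0 ≤ c w) ∧ x = ∑ w ∈ W, c w • w}

section Module

variable {E : Type*} [AddCommGroup E] [Module ℝ E]

theorem Finset.sum_smul_add_smul (W : Finset E) (c : E → ℝ) (f : E) (t : ℝ) :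
    ∑ w ∈ W, c w • (f + t • w) = (∑ w ∈ W, c w) • f + t • ∑ w ∈ W, c w • w := by
  simp only [smul_add, sum_add_distrib, sum_smul, smul_sum, smul_comm t]

theorem exists_pos_add_smul_sub_mem_convexHull {V : Set E} {W : Finset E} {c : E → ℝ}
    (hc : ∀ w, 0 ≤ c w) {v : E} (hv : v ∈ convexHull ℝ V) (f : E) {t : ℝ} (ht : 0 < t) :
    ∃ a > (0 : ℝ),
      f + a • (v + ∑ w ∈ W, c w • w - f) ∈ convexHull ℝ (V ∪ (fun w => f + t • w) '' W) := by
  obtain ⟨S, hS_def⟩ : ∃ S, ∑ w ∈ W, c w = S := ⟨_, rfl⟩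
  have hS : 0 ≤ S := hS_def ▸ sum_nonneg fun w _ => hc w
  refine ⟨t / (t + S), by positivity, ?_⟩
  have hmem := (convex_convexHull ℝ (V ∪ (fun w => f + t • w) '' W)).centerMass_mem
    (t := insertNone W) (w := fun i => i.elim t c) (z := fun i => i.elim v (fun w => f + t • w))
    (by rintro (_ | w) _ <;> simp [ht.le, hc])
    (by simp only [sum_insertNone, Option.elim, hS_def]; positivity)
    (by
      rintro (_ | w) hw
      · exact convexHull_mono Set.subset_union_left hv
      · exact subset_convexHull ℝ _ (Set.mem_union_right _ ⟨w, by simpa using hw, rfl⟩))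
  convert hmem using 1
  simp only [centerMass, sum_insertNone, Option.elim, sum_smul_add_smul, hS_def]
  have : t + S ≠ 0 := by positivity
  match_scalars <;> field_simp
  ring

end Module

theorem exists_pos_add_smul_mem_of_mem_nhds {E : Type*} [AddCommGroup E] [Module ℝ E]
    [TopologicalSpace E] [ContinuousAdd E] [ContinuousSMul ℝ E] {s : Set E} {x : E}
    (hs : s ∈ 𝓝 x) (u : E) : ∃ ε > (0 : ℝ), x + ε • u ∈ s := by
  have hlim : Tendsto (fun ε : ℝ => x + ε • u) (𝓝[>] 0) (𝓝 x) :=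
    ((continuous_const.add (continuous_id.smul continuous_const)).tendsto' 0 x
      (by simp)).mono_left nhdsWithin_le_nhds
  exact ((hlim.eventually hs).and self_mem_nhdsWithin).exists.imp fun ε h => ⟨h.2, h.1⟩

theorem Convex.mem_interior_of_forall_exists_add_smul_mem {E : Type*} [NormedAddCommGroup E]
    [NormedSpace ℝ E] [FiniteDimensional ℝ E] {C : Set E} (hC : Convex ℝ C) {x : E}
    (h : ∀ u, ∃ δ > (0 : ℝ), x + δ • u ∈ C) : x ∈ interior C := by
  have hx : x ∈ C := by simpa using (h 0).choose_spec.2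
  have hspan : affineSpan ℝ C = ⊤ := by
    refine (AffineSubspace.affineSpan_eq_top_iff_vectorSpan_eq_top_of_nonempty ℝ E E
      ⟨x, hx⟩).2 (eq_top_iff.2 fun u _ => ?_)
    obtain ⟨δ, hδ, hmem⟩ := h u
    have := (vectorSpan ℝ C).smul_mem δ⁻¹ (vsub_mem_vectorSpan ℝ hmem hx)
    rwa [vsub_eq_sub, add_sub_cancel_left, smul_smul, inv_mul_cancel₀ hδ.ne', one_smul] at this
  obtain ⟨g, hg⟩ := hC.interior_nonempty_iff_affineSpan_eq_top.2 hspan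
  obtain ⟨δ, hδ, hmem⟩ := h (x - g)
  have hcombo := hC.combo_interior_self_mem_interior hg hmem (a := δ / (1 + δ))
    (b := 1 / (1 + δ)) (by positivity) (by positivity) (by field_simp; ring)
  convert hcombo using 1
  match_scalars <;> field_simp
  ring

theorem exists_pos_add_smul_sub_mem_convexHull_of_mem_add_coneHull {n : ℕ}
    {V W : Finset (EuclideanSpace ℝ (Fin n))} {x : EuclideanSpace ℝ (Fin n)}
    (hx : x ∈ convexHull ℝ (V : Set (EuclideanSpace ℝ (Fin n))) + coneHull n W)
    (f : EuclideanSpace ℝ (Fin n)) {t : ℝ} (ht : 0 < t) :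
    ∃ a > (0 : ℝ), f + a • (x - f) ∈
      convexHull ℝ ((V : Set (EuclideanSpace ℝ (Fin n))) ∪ (fun w => f + t • w) '' W) := by
  obtain ⟨v, hv, _, ⟨c, hc, rfl⟩, rfl⟩ := hx
  exact exists_pos_add_smul_sub_mem_convexHull hc hv f ht

theorem interior_mem_Lt_general (n : ℕ) (V W : Finset (EuclideanSpace ℝ (Fin n)))
    (f : EuclideanSpace ℝ (Fin n))
    (hf : f ∈ interior (convexHull ℝ (V : Set (EuclideanSpace ℝ (Fin n))) + coneHull n W))
    (t : ℕ) (ht : 1 ≤ t) :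
    f ∈ interior (convexHull ℝ
      ((V : Set (EuclideanSpace ℝ (Fin n))) ∪ ((fun w => f + (t : ℝ) • w) '' W))) := by
  have ht₀ : (0 : ℝ) < t := by exact_mod_cast ht
  refine (convex_convexHull ℝ _).mem_interior_of_forall_exists_add_smul_mem fun u => ?_
  obtain ⟨ε, hε, hεL⟩ := exists_pos_add_smul_mem_of_mem_nhds (mem_interior_iff_mem_nhds.1 hf) u
  obtain ⟨a, ha, haC⟩ := exists_pos_add_smul_sub_mem_convexHull_of_mem_add_coneHull hεL f ht₀
  refine ⟨a * ε, mul_pos ha hε, ?_⟩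
  rwa [add_sub_cancel_left, smul_smul] at haC

/-- With `L = conv(V) + cone(W)` and `f ∈ int(L)`, the point `f` is interior to
`L_t = conv(V ∪ (f + tW))` for every `t ∈ ℕ`, `t ≥ 1`. -/
theorem interior_mem_Lt (n : ℕ) (V W : Finset (EuclideanSpace ℝ (Fin n)))
    (hV : V.Nonempty) (hW : W.Nonempty) (hW0 : (0 : EuclideanSpace ℝ (Fin n)) ∉ W)
    (f : EuclideanSpace ℝ (Fin n))
    (hf : f ∈ interior (convexHull ℝ (V : Set (EuclideanSpace ℝ (Fin n))) + coneHull n W))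
    (t : ℕ) (ht : 1 ≤ t) :
    f ∈ interior (convexHull ℝ
      ((V : Set (EuclideanSpace ℝ (Fin n))) ∪ ((fun w => f + (t : ℝ) • w) '' W))) :=
  interior_mem_Lt_general n V W f hf t ht
end

section
/- Let V be a nonempty finite subset of R^n, W a nonempty finite subset of R^n \ {0}, L = conv(V) + cone(W), f ∈ int(L), and L_t = conv(V ∪ (f + tW)) for t ∈ N. Then the sequence (L_t) is increasing with respect to set inclusion: L_t ⊆ L_{t+1} for all t. -/
open Pointwise

theorem eq_zero_or_exists_smul_mem_convexHull_of_mem_coneHull {n : ℕ}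
    {W : Finset (EuclideanSpace ℝ (Fin n))} {x : EuclideanSpace ℝ (Fin n)}
    (hx : x ∈ coneHull n W) :
    x = 0 ∨ ∃ C : ℝ, 0 < C ∧ ∃ y ∈ convexHull ℝ (W : Set (EuclideanSpace ℝ (Fin n))), x = C • y := by
  obtain ⟨c, hc, rfl⟩ := hx
  rcases (Finset.sum_nonneg fun w _ => hc w : 0 ≤ ∑ w ∈ W, c w).eq_or_lt with hC | hC
  · left
    rw [eq_comm, Finset.sum_eq_zero_iff_of_nonneg fun w _ => hc w] at hC
    exact Finset.sum_eq_zero fun w hw => by rw [hC w hw, zero_smul]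
  · refine .inr ⟨_, hC, W.centerMass c id, W.centerMass_mem_convexHull (fun w _ => hc w) hC
      fun w hw => hw, ?_⟩
    rw [Finset.centerMass, smul_inv_smul₀ hC.ne']
    rfl

theorem Convex.add_smul_convexHull_mem {E : Type*} [AddCommGroup E] [Module ℝ E] {K W : Set E}
    (hK : Convex ℝ K) {f : E} {s : ℝ} (hW : ∀ w ∈ W, f + s • w ∈ K) {y : E}
    (hy : y ∈ convexHull ℝ W) : f + s • y ∈ K :=
  convexHull_min (s := W) (t := (fun z => s • z) ⁻¹' ((fun z => f + z) ⁻¹' K)) hW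
    ((hK.translate_preimage_right f).smul_preimage s) hy

theorem Convex.mem_of_sub_eq_smul {E : Type*} [AddCommGroup E] [Module ℝ E] {K : Set E}
    (hK : Convex ℝ K) {f v y : E} {s C : ℝ} (hs : 0 < s) (hC : 0 ≤ C) (hv : v ∈ K)
    (hy : f + s • y ∈ K) (hfv : f - v = C • y) : f ∈ K := by
  have hsC : 0 < s + C := by positivity
  have hf : f = (s / (s + C)) • v + (C / (s + C)) • (f + s • y) := by
    rw [sub_eq_iff_eq_add] at hfv
    rw [smul_add, smul_smul, hfv, smul_add, smul_smul]
    match_scalars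
    · field_simp; ring
    · field_simp
  rw [hf]
  exact hK hv hy (by positivity) (by positivity) (by field_simp)

theorem Convex.add_smul_mem_of_le {E : Type*} [AddCommGroup E] [Module ℝ E] {K : Set E}
    (hK : Convex ℝ K) {f w : E} {r s : ℝ} (hf : f ∈ K) (hs : f + s • w ∈ K) (hs0 : 0 < s)
    (hr : 0 ≤ r) (hrs : r ≤ s) : f + r • w ∈ K := by
  have hrs' : r / s ∈ Set.Icc (0 : ℝ) 1 := ⟨by positivity, div_le_one_of_le₀ hrs hs0.le⟩
  simpa only [smul_smul, div_mul_cancel₀ r hs0.ne'] using hK.add_smul_mem hf hs hrs'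

theorem mem_convexHull_union_add_smul_of_mem_convexHull_add_coneHull {n : ℕ}
    {V W : Finset (EuclideanSpace ℝ (Fin n))} {f : EuclideanSpace ℝ (Fin n)}
    (hf : f ∈ convexHull ℝ (V : Set (EuclideanSpace ℝ (Fin n))) + coneHull n W) {s : ℝ}
    (hs : 0 < s) :
    f ∈ convexHull ℝ ((V : Set (EuclideanSpace ℝ (Fin n))) ∪ ((fun w => f + s • w) '' W)) := by
  set K := convexHull ℝ ((V : Set (EuclideanSpace ℝ (Fin n))) ∪ ((fun w => f + s • w) '' W))
  obtain ⟨v, hv, x, hx, rfl⟩ := Set.mem_add.mp hf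
  have hvK : v ∈ K := convexHull_mono Set.subset_union_left hv
  rcases eq_zero_or_exists_smul_mem_convexHull_of_mem_coneHull hx with rfl | ⟨C, hC, y, hy, rfl⟩
  · rwa [add_zero]
  · have hyK : v + C • y + s • y ∈ K := (convex_convexHull ℝ _).add_smul_convexHull_mem
      (fun w hw => subset_convexHull ℝ _ (.inr ⟨w, hw, rfl⟩)) hy
    exact (convex_convexHull ℝ _).mem_of_sub_eq_smul hs hC.le hvK hyK (add_sub_cancel_left v _)

theorem Lt_monotone_general (n : ℕ) (V W : Finset (EuclideanSpace ℝ (Fin n)))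
    (f : EuclideanSpace ℝ (Fin n))
    (hf : f ∈ interior (convexHull ℝ (V : Set (EuclideanSpace ℝ (Fin n))) + coneHull n W))
    (t : ℕ) :
    convexHull ℝ
        ((V : Set (EuclideanSpace ℝ (Fin n))) ∪ ((fun w => f + (t : ℝ) • w) '' W)) ⊆
      convexHull ℝ
        ((V : Set (EuclideanSpace ℝ (Fin n))) ∪ ((fun w => f + ((t : ℝ) + 1) • w) '' W)) := by
  have hK := convex_convexHull ℝ
    ((V : Set (EuclideanSpace ℝ (Fin n))) ∪ ((fun w => f + ((t : ℝ) + 1) • w) '' W))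
  have hfK := mem_convexHull_union_add_smul_of_mem_convexHull_add_coneHull
    (interior_subset hf) (by positivity : (0 : ℝ) < t + 1)
  refine convexHull_min ?_ hK
  rintro _ (hv | ⟨w, hw, rfl⟩)
  · exact subset_convexHull ℝ _ (.inl hv)
  · exact hK.add_smul_mem_of_le hfK (subset_convexHull ℝ _ (.inr ⟨w, hw, rfl⟩))
      (by positivity) (by positivity) (by linarith)

/-- The sets `L_t = conv(V ∪ (f + tW))` are increasing in `t`. -/
theorem Lt_monotone (n : ℕ) (V W : Finset (EuclideanSpace ℝ (Fin n)))
    (hV : V.Nonempty) (hW : W.Nonempty) (hW0 : (0 : EuclideanSpace ℝ (Fin n)) ∉ W)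
    (f : EuclideanSpace ℝ (Fin n))
    (hf : f ∈ interior (convexHull ℝ (V : Set (EuclideanSpace ℝ (Fin n))) + coneHull n W))
    (t : ℕ) (ht : 1 ≤ t) :
    convexHull ℝ
        ((V : Set (EuclideanSpace ℝ (Fin n))) ∪ ((fun w => f + (t : ℝ) • w) '' W)) ⊆
      convexHull ℝ
        ((V : Set (EuclideanSpace ℝ (Fin n))) ∪ ((fun w => f + ((t : ℝ) + 1) • w) '' W)) :=
  Lt_monotone_general n V W f hf t
end

section
/- Let M ⊆ R^n be a closed convex set, p ∈ R^n, α ≥ 0, and let P = conv(M ∪ M′) where M′ = (1+α)M + p. Then P = ⋃_{0 ≤ μ ≤ 1} ((1 + μα)M + μp). -/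
/-!
A segment from `x ∈ M` to `(1 + α) • y + p` with `y ∈ M`, at parameter `μ`, is
`((1 - μ) • x + (μ * (1 + α)) • y) + μ • p`; by convexity of `M` the first summand is
`(1 + μ * α) • w` for some `w ∈ M`, because the weights sum to `1 + μ * α`. Conversely the
point of `(1 + μ * α) • M + μ • p` coming from `x` lies on the segment from `x` to its own image.
-/

open Set

theorem Convex.image_smul_add {𝕜 E : Type*} [CommSemiring 𝕜] [PartialOrder 𝕜]
    [AddCommMonoid E] [Module 𝕜 E] {M : Set E} (hM : Convex 𝕜 M) (c : 𝕜) (p : E) :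
    Convex 𝕜 ((fun x => c • x + p) '' M) := by
  simpa only [add_comm] using hM.affinity p c

theorem Convex.convexJoin_image_smul_add_eq_iUnion {𝕜 E : Type*} [Field 𝕜] [LinearOrder 𝕜]
    [IsStrictOrderedRing 𝕜] [AddCommGroup E] [Module 𝕜 E] {M : Set E} (hM : Convex 𝕜 M) (p : E)
    {α : 𝕜} (hα : 0 ≤ 1 + α) :
    convexJoin 𝕜 M ((fun x => (1 + α) • x + p) '' M) =
      ⋃ μ ∈ Icc (0 : 𝕜) 1, (fun x => (1 + μ * α) • x + μ • p) '' M := by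
  ext z
  simp only [mem_convexJoin, mem_iUnion, mem_image, exists_prop, exists_exists_and_eq_and]
  constructor
  · rintro ⟨x, hx, y, hy, a, μ, ha, hμ, haμ, rfl⟩
    obtain ⟨w, hw, hw_eq⟩ := hM.exists_mem_add_smul_eq hx hy ha (mul_nonneg hμ hα)
    refine ⟨μ, ⟨hμ, by linarith⟩, w, hw, ?_⟩
    rw [show 1 + μ * α = a + μ * (1 + α) by linear_combination -haμ, hw_eq]
    module
  · rintro ⟨μ, ⟨hμ₀, hμ₁⟩, x, hx, rfl⟩
    exact ⟨x, hx, x, hx, 1 - μ, μ, by linarith, hμ₀, by ring, by module⟩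

theorem truncated_cone_eq_union_general (n : ℕ) (M : Set (EuclideanSpace ℝ (Fin n)))
    (hMv : Convex ℝ M)
    (p : EuclideanSpace ℝ (Fin n)) (α : ℝ) (hα : 0 ≤ α) :
    convexHull ℝ (M ∪ ((fun x => (1 + α) • x + p) '' M)) =
      ⋃ μ ∈ Set.Icc (0 : ℝ) 1, (fun x => (1 + μ * α) • x + μ • p) '' M := by
  rcases M.eq_empty_or_nonempty with rfl | hM
  · simp
  rw [convexHull_union hM (hM.image _), hMv.convexHull_eq, (hMv.image_smul_add _ p).convexHull_eq]
  exact hMv.convexJoin_image_smul_add_eq_iUnion p (by linarith)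

/-- A truncated cone `P = conv(M ∪ M′)` with `M′ = (1+α)M + p` equals the union of the
homothetical copies `(1 + μα)M + μp` for `0 ≤ μ ≤ 1`. -/
theorem truncated_cone_eq_union (n : ℕ) (M : Set (EuclideanSpace ℝ (Fin n)))
    (hMc : IsClosed M) (hMv : Convex ℝ M)
    (p : EuclideanSpace ℝ (Fin n)) (α : ℝ) (hα : 0 ≤ α) :
    convexHull ℝ (M ∪ ((fun x => (1 + α) • x + p) '' M)) =
      ⋃ μ ∈ Set.Icc (0 : ℝ) 1, (fun x => (1 + μ * α) • x + μ • p) '' M :=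
  truncated_cone_eq_union_general n M hMv p α hα
end

section
/- Let M ⊆ R^n be a closed convex set with 0 ∈ M, let p ∈ R^n, α ≥ 0, and M′ = (1+α)M + p. Let f = μp for some μ with 1/3 ≤ μ ≤ 1, and P = conv(M ∪ M′). Then (1/4)P + (3/4)f ⊆ conv({0} ∪ M′) ⊆ P. -/
/-!
Write `M' = (1+α)M + p` and `Q = conv({0} ∪ M')`; `Q` contains every point `s • y` with
`y ∈ M'` and `0 ≤ s ≤ 1`. Since the map `x ↦ (1/4)x + (3/4)μp` is affine, it suffices to send
the generators `M ∪ M'` into `Q`. A point `x ∈ M` goes to `s((1+α)c + p)` with `s = 3μ/4` and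
`c = x / (3μ(1+α)) ∈ M`, and a point `(1+α)b + p ∈ M'` goes to `s((1+α)c + p)` with
`s = (1+3μ)/4` and `c = b / (1+3μ) ∈ M`; the constraints `c ∈ M` and `s ≤ 1` are exactly
`1 ≤ 3μ(1+α)` and `μ ≤ 1`. The second inclusion is monotonicity of the convex hull, as `0 ∈ M`.
-/

open Set

section TruncatedCone

variable {E : Type*} [AddCommGroup E] [Module ℝ E] {M : Set E} {a l ν : ℝ} {p : E}

theorem smul_mem_convexHull_zero_union {S : Set E} {y : E} (hy : y ∈ S) {s : ℝ}
    (hs₀ : 0 ≤ s) (hs₁ : s ≤ 1) : s • y ∈ convexHull ℝ ({0} ∪ S) :=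
  (convex_convexHull ℝ _).smul_mem_of_zero_mem (subset_convexHull ℝ _ (.inl rfl))
    (subset_convexHull ℝ _ (.inr hy)) ⟨hs₀, hs₁⟩

theorem smul_add_smul_mem_convexHull_of_mem (hM : Convex ℝ M) (h0 : (0 : E) ∈ M) {x : E}
    (hx : x ∈ M) (hl : 0 < l) (hν : 0 ≤ ν) (hν₁ : ν ≤ 1) (hlν : l ≤ ν * a) :
    l • x + ν • p ∈ convexHull ℝ ({0} ∪ (fun x => a • x + p) '' M) := by
  have hνa : 0 < ν * a := hl.trans_le hlν
  have hc : (l / (ν * a)) • x ∈ M :=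
    hM.smul_mem_of_zero_mem h0 hx ⟨by positivity, (div_le_one hνa).2 hlν⟩
  convert smul_mem_convexHull_zero_union (mem_image_of_mem _ hc) hν hν₁ using 1
  have ha : a ≠ 0 := right_ne_zero_of_mul hνa.ne'
  have hν₀ : ν ≠ 0 := left_ne_zero_of_mul hνa.ne'
  match_scalars <;> field_simp

theorem smul_add_smul_mem_convexHull_of_mem_image (hM : Convex ℝ M) (h0 : (0 : E) ∈ M)
    {b : E} (hb : b ∈ M) (hl : 0 < l) (hν : 0 ≤ ν) (hlν : l + ν ≤ 1) :
    l • (a • b + p) + ν • p ∈ convexHull ℝ ({0} ∪ (fun x => a • x + p) '' M) := by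
  have hs : 0 < l + ν := by linarith
  have hc : (l / (l + ν)) • b ∈ M :=
    hM.smul_mem_of_zero_mem h0 hb ⟨by positivity, (div_le_one hs).2 (by linarith)⟩
  convert smul_mem_convexHull_zero_union (mem_image_of_mem _ hc) hs.le hlν using 1
  have : l + ν ≠ 0 := hs.ne'
  match_scalars <;> field_simp

theorem image_convexHull_subset_convexHull_zero_union (hM : Convex ℝ M) (h0 : (0 : E) ∈ M)
    (hl : 0 < l) (hν : 0 ≤ ν) (hlν : l ≤ ν * a) (hlν₁ : l + ν ≤ 1) :
    (fun x => l • x + ν • p) '' convexHull ℝ (M ∪ (fun x => a • x + p) '' M) ⊆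
      convexHull ℝ ({0} ∪ (fun x => a • x + p) '' M) := by
  rw [image_subset_iff]
  refine convexHull_min ?_ (((convex_convexHull ℝ _).translate_preimage_left _).smul_preimage l)
  rintro x (hx | ⟨b, hb, rfl⟩)
  · exact smul_add_smul_mem_convexHull_of_mem hM h0 hx hl hν (by linarith) hlν
  · exact smul_add_smul_mem_convexHull_of_mem_image hM h0 hb hl hν hlν₁

end TruncatedCone

theorem truncated_cone_sandwich_general (n : ℕ) (M : Set (EuclideanSpace ℝ (Fin n)))
    (hMv : Convex ℝ M) (h0 : (0 : EuclideanSpace ℝ (Fin n)) ∈ M)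
    (p : EuclideanSpace ℝ (Fin n)) (α : ℝ) (hα : 0 ≤ α)
    (μ : ℝ) (hμ₁ : 1 / 3 ≤ μ) (hμ₂ : μ ≤ 1) :
    ((fun x => (1 / 4 : ℝ) • x + (3 / 4 : ℝ) • (μ • p)) ''
        convexHull ℝ (M ∪ ((fun x => (1 + α) • x + p) '' M)) ⊆
      convexHull ℝ ({0} ∪ ((fun x => (1 + α) • x + p) '' M))) ∧
    convexHull ℝ ({0} ∪ ((fun x => (1 + α) • x + p) '' M)) ⊆
      convexHull ℝ (M ∪ ((fun x => (1 + α) • x + p) '' M)) := by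
  refine ⟨?_, convexHull_mono (union_subset_union_left _ (singleton_subset_iff.2 h0))⟩
  simp_rw [smul_smul]
  exact image_convexHull_subset_convexHull_zero_union hMv h0 (by norm_num) (by positivity)
    (by nlinarith) (by linarith)

/-- Sandwiching for truncated cones (reduced to `x = 0`): with `0 ∈ M`, `M′ = (1+α)M + p`,
`f = μp`, `1/3 ≤ μ ≤ 1` and `P = conv(M ∪ M′)`, one has
`(1/4)P + (3/4)f ⊆ conv({0} ∪ M′) ⊆ P`. -/
theorem truncated_cone_sandwich (n : ℕ) (M : Set (EuclideanSpace ℝ (Fin n)))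
    (hMc : IsClosed M) (hMv : Convex ℝ M) (h0 : (0 : EuclideanSpace ℝ (Fin n)) ∈ M)
    (p : EuclideanSpace ℝ (Fin n)) (α : ℝ) (hα : 0 ≤ α)
    (μ : ℝ) (hμ₁ : 1 / 3 ≤ μ) (hμ₂ : μ ≤ 1) :
    ((fun x => (1 / 4 : ℝ) • x + (3 / 4 : ℝ) • (μ • p)) ''
        convexHull ℝ (M ∪ ((fun x => (1 + α) • x + p) '' M)) ⊆
      convexHull ℝ ({0} ∪ ((fun x => (1 + α) • x + p) '' M))) ∧
    convexHull ℝ ({0} ∪ ((fun x => (1 + α) • x + p) '' M)) ⊆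
      convexHull ℝ (M ∪ ((fun x => (1 + α) • x + p) '' M)) :=
  truncated_cone_sandwich_general n M hMv h0 p α hα μ hμ₁ hμ₂
end

section
/- Let L′ ⊆ R^n be a bounded set, f′ ∈ int(L′), α > 1, and in R^{n+1} define the pyramid L = conv({a} ∪ F) with apex a = (f′, 1/(α−1)) and base F = (αL′ + (1−α)f′) × {−1}. Then the cross-section L ∩ (R^n × {0}) equals L′ × {0}, and the base of the homothetical copy L_α = (1/α)L + (1−1/α)f with f = (f′, 0) is F_α = L′ × {−1/α}. -/
/-!
A point of the segment from the apex `(f', 1/(α-1))` to a base point `(α x + (1-α) f', -1)`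
has height `0` exactly at the parameter `1/α`, and there it equals `(x, 0)`: the homothety with
centre `f'` and ratio `1/α` undoes the one with ratio `α`. Since the base is convex, the pyramid
is the union of these segments, so its slice at height `0` is `L' × {0}`. The same cancellation of
the two homotheties gives `F_α = L' × {-1/α}`.
-/

section Pyramid

variable {E : Type*} [AddCommGroup E] [Module ℝ E]

theorem inv_smul_homothety_add_eq {α : ℝ} (hα : α ≠ 0) (c x : E) :
    (1 / α) • (α • x + (1 - α) • c) + (1 - 1 / α) • c = x := by
  match_scalars
  · field_simp
  · field_simp
    ring

theorem inv_smul_pyramid_base_add_apex {α : ℝ} (hα : 1 < α) (c x : E) :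
    (1 / α) • ((α • x + (1 - α) • c, (-1 : ℝ)) : E × ℝ) + (1 - 1 / α) • (c, 1 / (α - 1)) =
      (x, 0) := by
  have hα0 : α ≠ 0 := by positivity
  have hα1 : α - 1 ≠ 0 := sub_ne_zero_of_ne hα.ne'
  refine Prod.ext (inv_smul_homothety_add_eq hα0 c x) ?_
  simp only [Prod.snd_add, Prod.smul_snd, smul_eq_mul]
  field_simp
  ring

theorem convex_image_homothety_prod_const {s : Set E} (hs : Convex ℝ s) (α t : ℝ) (c : E) :
    Convex ℝ ((fun x => (α • x + (1 - α) • c, t)) '' s) := by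
  have hf : ⇑((AffineMap.homothety c α).prod (AffineMap.const ℝ E t)) =
      fun x => (α • x + (1 - α) • c, t) := by
    funext x
    simp only [AffineMap.prod_apply, AffineMap.homothety_apply, AffineMap.const_apply,
      vsub_eq_sub, vadd_eq_add, Prod.mk.injEq, and_true]
    module
  rw [← hf]
  exact hs.affine_image _

theorem convexHull_pyramid_inter_snd_eq_zero {s : Set E} (hs : Convex ℝ s) (c : E) {α : ℝ}
    (hα : 1 < α) :
    convexHull ℝ ({((c, 1 / (α - 1)) : E × ℝ)} ∪ (fun x => (α • x + (1 - α) • c, (-1 : ℝ))) '' s)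
        ∩ {p | p.2 = 0} = (fun x => (x, 0)) '' s := by
  have hα0 : 0 < α := by linarith
  have hα1 : 0 < α - 1 := by linarith
  rcases s.eq_empty_or_nonempty with rfl | hne
  · ext p
    simp only [Set.image_empty, Set.union_empty, convexHull_singleton, Set.mem_inter_iff,
      Set.mem_singleton_iff, Set.mem_ofPred_eq, Set.mem_empty_iff_false, iff_false, not_and]
    rintro rfl
    positivity
  rw [Set.singleton_union, convexHull_insert (hne.image _),
    (convex_image_homothety_prod_const hs α (-1) c).convexHull_eq]
  ext p
  simp only [Set.mem_inter_iff, Set.mem_ofPred_eq, convexJoin_singleton_left, Set.mem_iUnion,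
    exists_prop, Set.exists_mem_image]
  constructor
  · rintro ⟨⟨x, hx, u, v, hu, hv, huv, rfl⟩, hp0⟩
    have hv' : v = 1 / α := by
      simp only [Prod.snd_add, Prod.smul_snd, smul_eq_mul] at hp0
      field_simp at hp0 ⊢
      linarith
    have hu' : u = 1 - 1 / α := by linarith
    subst hu' hv'
    exact ⟨x, hx, by rw [add_comm, inv_smul_pyramid_base_add_apex hα]⟩
  · rintro ⟨x, hx, rfl⟩
    refine ⟨⟨x, hx, 1 - 1 / α, 1 / α, ?_, by positivity, by ring, ?_⟩, rfl⟩
    · rw [sub_nonneg, div_le_one hα0]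
      exact hα.le
    · rw [add_comm, inv_smul_pyramid_base_add_apex hα]

theorem image_homothety_inv_pyramid_base {s : Set E} (c : E) {α : ℝ} (hα : α ≠ 0) :
    (fun p : E × ℝ => (1 / α) • p + (1 - 1 / α) • ((c, 0) : E × ℝ)) ''
        ((fun x => (α • x + (1 - α) • c, (-1 : ℝ))) '' s) =
      (fun x => (x, -(1 / α))) '' s := by
  rw [Set.image_image]
  refine Set.image_congr fun x _ => Prod.ext (inv_smul_homothety_add_eq hα c x) ?_
  simp

end Pyramid

theorem pyramid_cross_section_general (n : ℕ) (L' : Set (EuclideanSpace ℝ (Fin n)))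
    (hconv : Convex ℝ L')
    (f' : EuclideanSpace ℝ (Fin n))
    (α : ℝ) (hα : 1 < α) :
    (convexHull ℝ ({((f', 1 / (α - 1)) : EuclideanSpace ℝ (Fin n) × ℝ)} ∪
          ((fun x => (α • x + (1 - α) • f', (-1 : ℝ))) '' L')) ∩
        {p : EuclideanSpace ℝ (Fin n) × ℝ | p.2 = 0} =
      (fun x => (x, (0 : ℝ))) '' L') ∧
    ((fun p : EuclideanSpace ℝ (Fin n) × ℝ =>
          (1 / α) • p + (1 - 1 / α) • ((f', (0 : ℝ)) : EuclideanSpace ℝ (Fin n) × ℝ)) ''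
        ((fun x => (α • x + (1 - α) • f', (-1 : ℝ))) '' L') =
      (fun x => (x, -(1 / α))) '' L') :=
  ⟨convexHull_pyramid_inter_snd_eq_zero hconv f' hα,
    image_homothety_inv_pyramid_base f' (by positivity)⟩

/-- Pyramid construction in `ℝ^{n+1}`: with apex `a = (f', 1/(α-1))` and base
`F = (αL' + (1-α)f') × {-1}`, the cross-section of `L = conv({a} ∪ F)` at height `0`
is `L' × {0}`, and the base of the homothetical copy `L_α = (1/α)L + (1-1/α)f`
(with `f = (f',0)`) is `F_α = L' × {-1/α}`. -/
theorem pyramid_cross_section (n : ℕ) (L' : Set (EuclideanSpace ℝ (Fin n)))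
    (hb : Bornology.IsBounded L') (hconv : Convex ℝ L') (hcl : IsClosed L')
    (f' : EuclideanSpace ℝ (Fin n)) (hf' : f' ∈ interior L')
    (α : ℝ) (hα : 1 < α) :
    (convexHull ℝ ({((f', 1 / (α - 1)) : EuclideanSpace ℝ (Fin n) × ℝ)} ∪
          ((fun x => (α • x + (1 - α) • f', (-1 : ℝ))) '' L')) ∩
        {p : EuclideanSpace ℝ (Fin n) × ℝ | p.2 = 0} =
      (fun x => (x, (0 : ℝ))) '' L') ∧
    ((fun p : EuclideanSpace ℝ (Fin n) × ℝ =>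
          (1 / α) • p + (1 - 1 / α) • ((f', (0 : ℝ)) : EuclideanSpace ℝ (Fin n) × ℝ)) ''
        ((fun x => (α • x + (1 - α) • f', (-1 : ℝ))) '' L') =
      (fun x => (x, -(1 / α))) '' L') :=
  pyramid_cross_section_general n L' hconv f' α hα
end

section
/- Let n ≥ 1, let L be a simplex in R^n with n+1 facets containing f in its interior, and suppose there are integer points z₁, ..., z_{n+1} in the relative interiors of the n+1 distinct facets of L such that every segment [zᵢ, z_j] (i ≠ j) intersects L_α = (1/α)L + (1−1/α)f for some α > 1. Then every lattice-free polyhedron B ⊆ R^n with at most n facets fails to contain L_λ = (1/λ)L + (1−1/λ)f for any λ with 1 ≤ λ < α. Equivalently, ρ_f(B, L) ≥ α for every B ∈ L_n^n. -/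
open Pointwise

/-! Each integer point `zᵢ` lies outside `int B`, so it violates one of the at most `n` facet
inequalities of `B`; by pigeonhole two of them, `zᵢ` and `zⱼ`, violate the same one, and then so
does the whole segment `[zᵢ, zⱼ]`. But that segment meets `L_α`, and `L_α ⊆ int L_λ ⊆ int B`
because `λ < α`. -/

open Set AffineMap

section Halfspaces

variable {E : Type*} [NormedAddCommGroup E] [InnerProductSpace ℝ E]

theorem inner_lt_of_mem_interior_setOf_inner_le {c : E} (hc : c ≠ 0) {d : ℝ} {x : E}
    (hx : x ∈ interior {y | inner ℝ c y ≤ d}) : inner ℝ c x < d := by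
  have hc' : innerSL ℝ c ≠ 0 := fun h =>
    hc (norm_eq_zero.mp (by simp [← innerSL_apply_norm ℝ c, h]))
  simpa using ((innerSL ℝ c).isOpenMap_of_ne_zero hc').interior_preimage_subset_preimage_interior
    (s := Iic d) hx

theorem le_inner_of_mem_segment {c x y p : E} {d : ℝ} (hx : d ≤ inner ℝ c x)
    (hy : d ≤ inner ℝ c y) (hp : p ∈ segment ℝ x y) : d ≤ inner ℝ c p :=
  (convex_halfSpace_ge (innerₛₗ ℝ c).isLinear d).segment_subset hx hy hp

variable {ι : Type*} {c : ι → E} {d : ι → ℝ}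

theorem convex_setOf_forall_inner_le : Convex ℝ {x | ∀ j, inner ℝ (c j) x ≤ d j} := by
  rw [ofPred_forall]
  exact convex_iInter fun j => convex_halfSpace_le (innerₛₗ ℝ (c j)).isLinear (d j)

theorem exists_le_inner_of_notMem_interior [Finite ι] {x : E}
    (hx : x ∉ interior {y | ∀ j, inner ℝ (c j) y ≤ d j}) : ∃ j, d j ≤ inner ℝ (c j) x := by
  by_contra! h
  have hopen : IsOpen {y | ∀ j, inner ℝ (c j) y < d j} := by
    rw [ofPred_forall]
    exact isOpen_iInter_of_finite fun j => isOpen_lt (by fun_prop) continuous_const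
  exact hx (interior_maximal (fun y hy j => (hy j).le) hopen h)

end Halfspaces

section Homothety

variable {E : Type*} [NormedAddCommGroup E] [NormedSpace ℝ E]

theorem homothety_eq_smul_add_smul (c x : E) (t : ℝ) : homothety c t x = t • x + (1 - t) • c := by
  rw [homothety_eq_lineMap, lineMap_apply_module, add_comm]

/-- The point `homothety c r x` is `homothety c t y` for `y` strictly between `c` and `x`. -/
theorem Convex.homothety_mem_interior_image_homothety {s : Set E} (hs : Convex ℝ s) {c x : E}
    (hc : c ∈ interior s) (hx : x ∈ s) {r t : ℝ} (hr : 0 < r) (hrt : r < t) :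
    homothety c r x ∈ interior (homothety c t '' s) := by
  have ht : 0 < t := hr.trans hrt
  have hy : homothety c (r / t) x ∈ interior s := by
    rw [homothety_eq_smul_add_smul, add_comm]
    exact hs.combo_interior_self_mem_interior hc hx
      (sub_pos.mpr ((div_lt_one ht).mpr hrt)) (by positivity) (by ring)
  refine (homothety_isOpenMap c t ht.ne').image_interior_subset s ⟨_, hy, ?_⟩
  rw [← homothety_mul_apply, mul_div_cancel₀ r ht.ne']

end Homothety

theorem IsLatticeFree.notMem_interior {n : ℕ} {B : Set (EuclideanSpace ℝ (Fin n))}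
    (hB : IsLatticeFree n B) {z : EuclideanSpace ℝ (Fin n)} (hz : ∀ t, ∃ m : ℤ, z t = m) :
    z ∉ interior B := by
  choose m hm using hz
  have hzm : z = WithLp.toLp 2 (fun t => (m t : ℝ)) := by
    ext t
    exact hm t
  exact hzm ▸ hB.2.2.2 m

theorem no_small_facet_polyhedron_contains_general (n : ℕ)
    (a : Fin (n + 1) → EuclideanSpace ℝ (Fin n)) (b : Fin (n + 1) → ℝ)
    (L : Set (EuclideanSpace ℝ (Fin n)))
    (hL : L = {x | ∀ i, (inner ℝ (a i) (x) : ℝ) ≤ b i})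
    (f : EuclideanSpace ℝ (Fin n)) (hf : f ∈ interior L)
    (α : ℝ) (hα : 1 < α)
    (z : Fin (n + 1) → EuclideanSpace ℝ (Fin n))
    (hzint : ∀ i t, ∃ m : ℤ, z i t = (m : ℝ))
    (hseg : ∀ i j, i ≠ j →
      ((segment ℝ (z i) (z j)) ∩
        ((fun x => (1 / α) • x + (1 - 1 / α) • f) '' L)).Nonempty) :
    ∀ (B : Set (EuclideanSpace ℝ (Fin n))) (k : ℕ), k ≤ n →
      IsLatticeFree n B → HalfspaceRep n k B →
      ∀ l : ℝ, 1 ≤ l → l < α →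
        ¬ ((fun x => (1 / l) • x + (1 - 1 / l) • f) '' L ⊆ B) := by
  intro B k hk hB ⟨c, d, hc, hBeq⟩ l hl hlα hsub
  simp only [← homothety_eq_smul_add_smul] at hseg hsub
  have hviol : ∀ i, ∃ j, d j ≤ inner ℝ (c j) (z i) := fun i =>
    exists_le_inner_of_notMem_interior (hBeq ▸ hB.notMem_interior (hzint i))
  choose g hg using hviol
  obtain ⟨i, i', hne, hgi⟩ :=
    Fintype.exists_ne_map_eq_of_card_lt g (by simpa using Nat.lt_succ_of_le hk)
  obtain ⟨p, hp, x, hx, rfl⟩ := hseg i i' hne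
  have hpB : homothety f (1 / α) x ∈ interior B :=
    interior_mono hsub ((hL ▸ convex_setOf_forall_inner_le).homothety_mem_interior_image_homothety
      hf hx (by positivity) (one_div_lt_one_div_of_lt (by linarith) hlα))
  rw [hBeq] at hpB
  have hlt := inner_lt_of_mem_interior_setOf_inner_le (hc (g i))
    (interior_mono (ofPred_subset_ofPred.mpr fun y hy => hy (g i)) hpB)
  have hle := le_inner_of_mem_segment (hg i) (hgi ▸ hg i') hp
  linarith

/-- If `L` is a simplex with `n+1` facets, `f ∈ int L`, integer points `zᵢ` lie in the
relative interiors of the `n+1` facets, and every segment `[zᵢ, z_j]` meets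
`L_α = (1/α)L + (1-1/α)f`, then no lattice-free polyhedron with at most `n` facets
contains `L_λ = (1/λ)L + (1-1/λ)f` for any `1 ≤ λ < α`; i.e. `ρ_f(B,L) ≥ α`. -/
theorem no_small_facet_polyhedron_contains (n : ℕ) (hn : 1 ≤ n)
    (a : Fin (n + 1) → EuclideanSpace ℝ (Fin n)) (b : Fin (n + 1) → ℝ)
    (ha : ∀ i, a i ≠ 0)
    (L : Set (EuclideanSpace ℝ (Fin n)))
    (hL : L = {x | ∀ i, (inner ℝ (a i) (x) : ℝ) ≤ b i})
    (f : EuclideanSpace ℝ (Fin n)) (hf : f ∈ interior L)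
    (α : ℝ) (hα : 1 < α)
    (z : Fin (n + 1) → EuclideanSpace ℝ (Fin n))
    (hzint : ∀ i t, ∃ m : ℤ, z i t = (m : ℝ))
    (hzL : ∀ i, z i ∈ L)
    (hzeq : ∀ i, (inner ℝ (a i) (z i) : ℝ) = b i)
    (hzstrict : ∀ i j, i ≠ j → (inner ℝ (a j) (z i) : ℝ) < b j)
    (hseg : ∀ i j, i ≠ j →
      ((segment ℝ (z i) (z j)) ∩
        ((fun x => (1 / α) • x + (1 - 1 / α) • f) '' L)).Nonempty) :
    ∀ (B : Set (EuclideanSpace ℝ (Fin n))) (k : ℕ), k ≤ n →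
      IsLatticeFree n B → HalfspaceRep n k B →
      ∀ l : ℝ, 1 ≤ l → l < α →
        ¬ ((fun x => (1 / l) • x + (1 - 1 / l) • f) '' L ⊆ B) :=
  no_small_facet_polyhedron_contains_general n a b L hL f hf α hα z hzint hseg
end
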